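/- Let n, d, d_h, d_p be positive natural numbers with d_h < d, d_h < d_p, and n ≥ d_h + d_p. Then there exist matrices X ∈ ℝ^{n×d}, P̂ ∈ ℝ^{n×d_p}, W_Q ∈ ℝ^{d×d_h}, and W_K ∈ ℝ^{d×d_h} such that the matrix A_r = X · W_Q · W_Kᵀ · Xᵀ + P̂ · P̂ᵀ ∈ ℝ^{n×n} satisfies rank(A_r) = d_p + d_h, which is strictly greater than d_h. -/
import Mathlib

open Matrix

lemma myaux (n d dh dp : ℕ) (hlt : dh < d) (hge : dh + dp ≤ n) :
    ((Matrix.of fun (i : Fin n) (j : Fin d) => if (i:ℕ) = (j:ℕ) then (1:ℝ) else 0) *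
        (Matrix.of fun (j : Fin d) (k : Fin dh) => if (j:ℕ) = (k:ℕ) then (1:ℝ) else 0) *
        (Matrix.of fun (j : Fin d) (k : Fin dh) => if (j:ℕ) = (k:ℕ) then (1:ℝ) else 0)ᵀ *
        (Matrix.of fun (i : Fin n) (j : Fin d) => if (i:ℕ) = (j:ℕ) then (1:ℝ) else 0)ᵀ +
      (Matrix.of fun (i : Fin n) (j : Fin dp) => if (i:ℕ) = (j:ℕ) + dh then (1:ℝ) else 0) *
        (Matrix.of fun (i : Fin n) (j : Fin dp) => if (i:ℕ) = (j:ℕ) + dh then (1:ℝ) else 0)ᵀ)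
      = Matrix.diagonal (fun i : Fin n => if (i:ℕ) < dh + dp then (1:ℝ) else 0) := by
  set X : Matrix (Fin n) (Fin d) ℝ := Matrix.of fun i j => if (i:ℕ) = (j:ℕ) then 1 else 0 with hX
  set Phat : Matrix (Fin n) (Fin dp) ℝ := Matrix.of fun i j => if (i:ℕ) = (j:ℕ) + dh then 1 else 0 with hP
  set W : Matrix (Fin d) (Fin dh) ℝ := Matrix.of fun j k => if (j:ℕ) = (k:ℕ) then 1 else 0 with hW
  have hY : X * W = Matrix.of (fun (i : Fin n) (k : Fin dh) => if (i:ℕ) = (k:ℕ) then (1:ℝ) else 0) := by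
    ext i k
    simp only [Matrix.mul_apply, Matrix.of_apply, hX, hW]
    rw [Finset.sum_eq_single (Fin.castLE hlt.le k)]
    · simp [Fin.castLE]
    · intro j _ hj
      have : (j:ℕ) ≠ (k:ℕ) := by
        intro h; apply hj; apply Fin.ext; simpa [Fin.castLE] using h
      simp [this]
    · simp
  have hassoc : X * W * Wᵀ * Xᵀ = (X * W) * (X * W)ᵀ := by
    rw [Matrix.transpose_mul, Matrix.mul_assoc]
  ext i i'
  rw [Matrix.add_apply, hassoc, hY]
  have h1 : (Matrix.of (fun (i : Fin n) (k : Fin dh) => if (i:ℕ) = (k:ℕ) then (1:ℝ) else 0) *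
      (Matrix.of (fun (i : Fin n) (k : Fin dh) => if (i:ℕ) = (k:ℕ) then (1:ℝ) else 0))ᵀ) i i'
      = if i = i' ∧ (i:ℕ) < dh then 1 else 0 := by
    simp only [Matrix.mul_apply, Matrix.transpose_apply, Matrix.of_apply]
    by_cases h : i = i' ∧ (i:ℕ) < dh
    · obtain ⟨rfl, h2⟩ := h
      rw [Finset.sum_eq_single (⟨(i:ℕ), h2⟩ : Fin dh)]
      · simp [h2]
      · intro k _ hk
        have : (i:ℕ) ≠ (k:ℕ) := by
          intro h; apply hk; apply Fin.ext; simp [← h]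
        simp [this]
      · simp
    · rw [if_neg h]
      apply Finset.sum_eq_zero
      intro k _
      by_cases h1 : (i:ℕ) = (k:ℕ)
      · by_cases h2 : (i':ℕ) = (k:ℕ)
        · exact absurd ⟨Fin.ext (h1.trans h2.symm), h1 ▸ k.2⟩ h
        · simp [h2]
      · simp [h1]
  have h2 : (Phat * Phatᵀ) i i' = if i = i' ∧ dh ≤ (i:ℕ) ∧ (i:ℕ) < dh + dp then 1 else 0 := by
    simp only [Matrix.mul_apply, Matrix.transpose_apply, Matrix.of_apply, hP]
    by_cases h : i = i' ∧ dh ≤ (i:ℕ) ∧ (i:ℕ) < dh + dp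
    · obtain ⟨rfl, h2, h3⟩ := h
      rw [Finset.sum_eq_single (⟨(i:ℕ) - dh, by omega⟩ : Fin dp)]
      · have hc : (i:ℕ) = ((⟨(i:ℕ) - dh, by omega⟩ : Fin dp) : ℕ) + dh := by simp; omega
        rw [if_pos hc, if_pos ⟨rfl, h2, h3⟩]; norm_num
      · intro k _ hk
        have : (i:ℕ) ≠ (k:ℕ) + dh := by
          intro h; apply hk; apply Fin.ext; simp; omega
        simp [this]
      · simp
    · rw [if_neg h]
      apply Finset.sum_eq_zero
      intro k _
      by_cases h1 : (i:ℕ) = (k:ℕ) + dh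
      · by_cases h2 : (i':ℕ) = (k:ℕ) + dh
        · exact absurd ⟨Fin.ext (h1.trans h2.symm), by omega, by have := k.2; omega⟩ h
        · simp [h2]
      · simp [h1]
  rw [h1, h2, Matrix.diagonal_apply]
  by_cases hii : i = i'
  · subst hii
    simp only [true_and, if_pos rfl]
    split_ifs <;> norm_num <;> omega
  · simp [hii]

/-- There exist token embeddings `X`, layer-wise position embeddings `P̂`, and
query/key projections `W_Q, W_K` such that the decoupled attention matrix
`A_r = X * W_Q * W_Kᵀ * Xᵀ + P̂ * P̂ᵀ` has rank exactly `d_p + d_h > d_h`. -/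
theorem exists_decoupled_attention_rank_eq
    (n d dh dp : ℕ) (hn : 0 < n) (hd : 0 < d) (hdh : 0 < dh) (hdp : 0 < dp)
    (hlt : dh < d) (hltp : dh < dp) (hge : dh + dp ≤ n) :
    ∃ (X : Matrix (Fin n) (Fin d) ℝ)
      (Phat : Matrix (Fin n) (Fin dp) ℝ)
      (WQ WK : Matrix (Fin d) (Fin dh) ℝ),
      (X * WQ * WKᵀ * Xᵀ + Phat * Phatᵀ).rank = dp + dh ∧ dh < dp + dh := by
  refine ⟨Matrix.of fun (i : Fin n) (j : Fin d) => if (i:ℕ) = (j:ℕ) then (1:ℝ) else 0,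
    Matrix.of fun (i : Fin n) (j : Fin dp) => if (i:ℕ) = (j:ℕ) + dh then (1:ℝ) else 0,
    Matrix.of fun (j : Fin d) (k : Fin dh) => if (j:ℕ) = (k:ℕ) then (1:ℝ) else 0,
    Matrix.of fun (j : Fin d) (k : Fin dh) => if (j:ℕ) = (k:ℕ) then (1:ℝ) else 0,
    ?_, by omega⟩
  rw [myaux n d dh dp hlt hge, Matrix.rank_diagonal]
  have h0 : Fintype.card {i : Fin n // (if (i:ℕ) < dh + dp then (1:ℝ) else 0) ≠ 0}
      = Fintype.card {i : Fin n // (i:ℕ) < dh + dp} := by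
    apply Fintype.card_congr
    apply Equiv.subtypeEquivRight
    intro x
    by_cases h : (x:ℕ) < dh + dp <;> simp [h]
  rw [h0]
  have e : {i : Fin n // (i:ℕ) < dh + dp} ≃ Fin (dh + dp) :=
    { toFun := fun x => ⟨x.1, x.2⟩
      invFun := fun y => ⟨Fin.castLE hge y, y.2⟩
      left_inv := fun x => by ext; simp [Fin.castLE]
      right_inv := fun y => by ext; simp [Fin.castLE] }
  rw [Fintype.card_congr e, Fintype.card_fin]
  omega
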